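/- arXiv:2103.09333 — 2 statements merged into one kernel-verified Lean document; each statement's English description precedes it below -/
import Mathlib

section
/- For every zigzag language L_n ⊆ S_n and any two consecutive permutations π, ρ in the sequence J(L_n), the permutation ρ is obtained from π by a left or right jump of some value, and this jump is minimal with respect to L_n. -/
/-!
Shared definitions: permutations in one-line notation as lists of naturals,
deletion `p`, insertion `c_i`, zigzag languages, the Gray code sequence `J(L_n)`,
jumps, minimal jumps, the auxiliary sequences `s_n^π`, Algorithm M,
vincular pattern containment and 2-clumped permutations.
-/

/-- `S_n`: permutations of `{1,…,n}` in one-line notation, as lists of naturals. -/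
def SymmList (n : ℕ) : Set (List ℕ) := {l | List.Perm l (List.range' 1 n)}

/-- The identity permutation `id_n = 1 2 ⋯ n`. -/
def idPerm (n : ℕ) : List ℕ := List.range' 1 n

/-- `p(π)`: delete the largest entry `n = π.length` from the permutation `π ∈ S_n`. -/
def pdel (l : List ℕ) : List ℕ := l.erase l.length

/-- `c_i(π)`: insert the new largest value `π.length + 1` at (1-indexed) position `i`. -/
def cins (i : ℕ) (l : List ℕ) : List ℕ :=
  l.take (i - 1) ++ (l.length + 1) :: l.drop (i - 1)

/-- Zigzag languages of permutations: `L_0 = {ε}` is a zigzag language, and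
`L ⊆ S_{n+1}` is a zigzag language if `p(L)` is a zigzag language and
`c_1(π), c_{n+1}(π) ∈ L` for every `π ∈ p(L)`. -/
inductive IsZigzag : ℕ → Set (List ℕ) → Prop
  | zero : IsZigzag 0 {[]}
  | succ (n : ℕ) (L : Set (List ℕ)) :
      L ⊆ SymmList (n + 1) →
      IsZigzag n (pdel '' L) →
      (∀ l ∈ pdel '' L, cins 1 l ∈ L ∧ cins (n + 1) l ∈ L) →
      IsZigzag (n + 1) L

/-- `→c(π)`: the sequence of those `c_1(π),…,c_n(π)` lying in `L`,
in increasing order of the insertion position. -/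
noncomputable def cSeq (L : Set (List ℕ)) (n : ℕ) (l : List ℕ) : List (List ℕ) :=
  ((List.range' 1 n).map (fun i => cins i l)).filter
    (fun x => @decide (x ∈ L) (Classical.propDecidable _))

/-- The Gray code sequence `J(L_n)` of a language `L ⊆ S_n`:
`J(L_0) = ε`, and `J(L_{n+1})` is obtained from `J(L_n)` (for the language
`p(L)`) by replacing its entries alternately by `←c(π)` (the reverse of
`→c(π)`) and `→c(π)`. -/
noncomputable def Jseq : ℕ → Set (List ℕ) → List (List ℕ)
  | 0, _ => [[]]
  | (n + 1), L =>
      (((Jseq n (pdel '' L)).mapIdx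
        (fun k π => if k % 2 = 0 then (cSeq L (n + 1) π).reverse
                    else cSeq L (n + 1) π)).flatten)

/-- `ρ` is obtained from `π` by a right jump of the value `v` by `d` steps. -/
def RightJump (π ρ : List ℕ) (v d : ℕ) : Prop :=
  0 < d ∧ ∃ A B C : List ℕ, B.length = d ∧ (∀ x ∈ B, x < v) ∧
    π = A ++ v :: (B ++ C) ∧ ρ = A ++ (B ++ v :: C)

/-- `ρ` is obtained from `π` by a left jump of the value `v` by `d` steps. -/
def LeftJump (π ρ : List ℕ) (v d : ℕ) : Prop := RightJump ρ π v d

/-- A right jump that is minimal with respect to `L`: every right jump of the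
same value by fewer steps yields a permutation not in `L`. -/
def MinimalRightJump (L : Set (List ℕ)) (π ρ : List ℕ) (v d : ℕ) : Prop :=
  RightJump π ρ v d ∧ ∀ d' ρ', d' < d → RightJump π ρ' v d' → ρ' ∉ L

/-- A left jump that is minimal with respect to `L`. -/
def MinimalLeftJump (L : Set (List ℕ)) (π ρ : List ℕ) (v d : ℕ) : Prop :=
  LeftJump π ρ v d ∧ ∀ d' ρ', d' < d → LeftJump π ρ' v d' → ρ' ∉ L

/-- The auxiliary sequence `s_n^π` of a permutation `π` occurring in `J(L_n)`,
as a function of the index `i ∈ {1,…,n}` (value `0` outside this range). -/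
noncomputable def sVec : ℕ → Set (List ℕ) → List ℕ → ℕ → ℕ
  | 0, _, _, _ => 0
  | 1, _, _, i => if i = 1 then 1 else 0
  | (n + 2), L, π, i =>
      let L' := pdel '' L
      let π' := pdel π
      let cbar := if ((Jseq (n + 1) L').idxOf π') % 2 = 0
                  then (cSeq L (n + 2) π').reverse else cSeq L (n + 2) π'
      if cbar.getLast? = some π then
        (if i ≤ n then sVec (n + 1) L' π' i
         else if i = n + 1 then n + 1
         else if i = n + 2 then sVec (n + 1) L' π' (n + 1) else 0)
      else
        (if i ≤ n + 1 then sVec (n + 1) L' π' i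
         else if i = n + 2 then n + 2 else 0)

/-- `j` is at the first position of `l`, or the entry immediately left of `j`
in `l` is larger than `j`. -/
def AtLeftTurn (l : List ℕ) (j : ℕ) : Prop :=
  ∃ A B : List ℕ, l = A ++ j :: B ∧ (A = [] ∨ ∃ x, A.getLast? = some x ∧ j < x)

/-- `j` is at the last position of `l`, or the entry immediately right of `j`
in `l` is larger than `j`. -/
def AtRightTurn (l : List ℕ) (j : ℕ) : Prop :=
  ∃ A B : List ℕ, l = A ++ j :: B ∧ (B = [] ∨ ∃ x, B.head? = some x ∧ j < x)

/-- `j` is not at the first position of `l`, and the entry immediately left of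
`j` in `l` is smaller than `j`. -/
def SmallerLeftNeighbor (l : List ℕ) (j : ℕ) : Prop :=
  ∃ A B : List ℕ, ∃ x, l = A ++ j :: B ∧ A.getLast? = some x ∧ x < j

/-- `j` is not at the last position of `l`, and the entry immediately right of
`j` in `l` is smaller than `j`. -/
def SmallerRightNeighbor (l : List ℕ) (j : ℕ) : Prop :=
  ∃ A B : List ℕ, ∃ x, l = A ++ j :: B ∧ B.head? = some x ∧ x < j

/-- A state of Algorithm M: the current permutation `π` and the auxiliary
arrays `o` and `s`; `o j = false` encodes direction `L` (left) and
`o j = true` encodes `R` (right). -/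
structure MState where
  perm : List ℕ
  o : ℕ → Bool
  s : ℕ → ℕ

/-- The initial state of Algorithm M (step M1): `π = id_n`, `o_j = L`, `s_j = j`. -/
def MInit (n : ℕ) : MState := ⟨idPerm n, fun _ => false, fun j => j⟩

/-- One iteration (steps M3–M5) of Algorithm M on a language `L ⊆ S_n`:
with `j := s_n ≠ 1`, the permutation jumps minimally in the direction `o_j`
(step M4), and the arrays `o`, `s` are updated as in step M5. -/
def MStep (L : Set (List ℕ)) (n : ℕ) (σ σ' : MState) : Prop :=
  σ.s n ≠ 1 ∧
  σ'.perm ∈ L ∧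
  ((σ.o (σ.s n) = false ∧ ∃ d, MinimalLeftJump L σ.perm σ'.perm (σ.s n) d) ∨
   (σ.o (σ.s n) = true ∧ ∃ d, MinimalRightJump L σ.perm σ'.perm (σ.s n) d)) ∧
  (((σ.o (σ.s n) = false ∧ AtLeftTurn σ'.perm (σ.s n)) ∨
    (σ.o (σ.s n) = true ∧ AtRightTurn σ'.perm (σ.s n))) →
      σ'.o = Function.update σ.o (σ.s n) (!σ.o (σ.s n)) ∧
      σ'.s = Function.update (Function.update (Function.update σ.s n n) (σ.s n)
               ((Function.update σ.s n n) (σ.s n - 1))) (σ.s n - 1) (σ.s n - 1)) ∧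
  (¬ ((σ.o (σ.s n) = false ∧ AtLeftTurn σ'.perm (σ.s n)) ∨
      (σ.o (σ.s n) = true ∧ AtRightTurn σ'.perm (σ.s n))) →
      σ'.o = σ.o ∧ σ'.s = Function.update σ.s n n)

/-- `π` contains the vincular pattern `pat` whose marked adjacent pair starts
at (0-indexed) position `k` of `pat`. -/
def ContainsVincular (π pat : List ℕ) (k : ℕ) : Prop :=
  ∃ f : ℕ → ℕ, StrictMonoOn f (Set.Iio pat.length) ∧
    (∀ i < pat.length, f i < π.length) ∧
    f (k + 1) = f k + 1 ∧
    (∀ i < pat.length, ∀ j < pat.length,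
      (pat.getD i 0 < pat.getD j 0 ↔ π.getD (f i) 0 < π.getD (f j) 0))

/-- 2-clumped permutations: those avoiding the vincular patterns
`3(51)24`, `3(51)42`, `24(51)3` and `42(51)3`. -/
def TwoClumped (π : List ℕ) : Prop :=
  ¬ ContainsVincular π [3, 5, 1, 2, 4] 1 ∧ ¬ ContainsVincular π [3, 5, 1, 4, 2] 1 ∧
  ¬ ContainsVincular π [2, 4, 5, 1, 3] 2 ∧ ¬ ContainsVincular π [4, 2, 5, 1, 3] 2

/-- `S'_n`: the set of 2-clumped permutations in `S_n`. -/
def SClump (n : ℕ) : Set (List ℕ) := {l ∈ SymmList n | TwoClumped l}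

/-- `B_n`: the permutations obtained from `1` by repeatedly inserting the new
largest value at the first or the last position. -/
def Bset : ℕ → Set (List ℕ)
  | 0 => {[]}
  | 1 => {[1]}
  | (n + 2) => {l | ∃ π ∈ Bset (n + 1), l = cins 1 π ∨ l = cins (n + 2) π}

/-!
Consecutive entries of `J(L_{n+1})` either lie in a single block `←c(π)` or `→c(π)`, or
straddle two blocks. Inside a block they are `c_i(π)` and `c_j(π)` with no `c_t(π) ∈ L` for
`i < t < j`, so the value `n + 1` jumps minimally by `j - i` steps. Because the blocks alternate
in direction, two entries straddling blocks are `c_1(π), c_1(π')` or `c_{n+1}(π), c_{n+1}(π')` for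
consecutive `π, π'` in `J(L_n)`. By induction `π'` arises from `π` by a minimal jump with
respect to `p(L_{n+1}) = L_n`; prepending or appending the largest value commutes with jumps of
smaller values and is undone by `p`, so the jump stays minimal with respect to `L_{n+1}`.
-/

namespace List

variable {α β : Type*}

theorem exists_getElem?_of_reverse_consecutive {l : List α} {k : ℕ} {a b : α}
    (ha : l.reverse[k]? = some a) (hb : l.reverse[k + 1]? = some b) :
    ∃ k', l[k']? = some b ∧ l[k' + 1]? = some a := by
  have hk : k + 1 < l.length := by simpa using (getElem?_eq_some_iff.mp hb).1
  rw [getElem?_reverse (by omega)] at ha hb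
  refine ⟨l.length - 1 - (k + 1), hb, ?_⟩
  rwa [show l.length - 1 - (k + 1) + 1 = l.length - 1 - k by omega]

theorem flatten_consecutive_cases {ll : List (List α)} (hne : ∀ l ∈ ll, l ≠ [])
    {k : ℕ} {a b : α}
    (ha : ll.flatten[k]? = some a) (hb : ll.flatten[k + 1]? = some b) :
    (∃ (m : ℕ) (l : List α) (i : ℕ),
      ll[m]? = some l ∧ l[i]? = some a ∧ l[i + 1]? = some b) ∨
    (∃ (m : ℕ) (l l' : List α), ll[m]? = some l ∧ ll[m + 1]? = some l' ∧
      l.getLast? = some a ∧ l'.head? = some b) := by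
  induction ll generalizing k with
  | nil => simp at ha
  | cons c rest ih =>
    rw [flatten_cons, getElem?_append] at ha hb
    by_cases hin : k + 1 < c.length
    · rw [if_pos (by omega)] at ha
      rw [if_pos hin] at hb
      exact Or.inl ⟨0, c, k, rfl, ha, hb⟩
    by_cases hlast : k < c.length
    · rw [if_pos hlast] at ha
      rw [if_neg hin, show k + 1 - c.length = 0 by omega] at hb
      obtain _ | ⟨c', rest'⟩ := rest
      · simp at hb
      have hc' : 0 < c'.length := length_pos_iff.mpr (hne c' (by simp))
      rw [flatten_cons, getElem?_append_left hc'] at hb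
      refine Or.inr ⟨0, c, c', rfl, rfl, ?_, by rwa [head?_eq_getElem?]⟩
      rwa [getLast?_eq_getElem?, show c.length - 1 = k by omega]
    rw [if_neg hlast] at ha
    rw [if_neg hin, show k + 1 - c.length = k - c.length + 1 by omega] at hb
    rcases ih (fun l hl => hne l (mem_cons_of_mem c hl)) ha hb with
      ⟨m, l, i, h⟩ | ⟨m, l, l', h⟩
    · exact Or.inl ⟨m + 1, l, i, h⟩
    · exact Or.inr ⟨m + 1, l, l', h⟩

theorem flatten_mapIdx_consecutive_cases {l : List α} {f : ℕ → α → List β}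
    (hne : ∀ m, ∀ x ∈ l, f m x ≠ []) {k : ℕ} {a b : β}
    (ha : (l.mapIdx f).flatten[k]? = some a) (hb : (l.mapIdx f).flatten[k + 1]? = some b) :
    (∃ m x i, l[m]? = some x ∧ (f m x)[i]? = some a ∧ (f m x)[i + 1]? = some b) ∨
    (∃ m x y, l[m]? = some x ∧ l[m + 1]? = some y ∧
      (f m x).getLast? = some a ∧ (f (m + 1) y).head? = some b) := by
  have hblock : ∀ m blk, (l.mapIdx f)[m]? = some blk →
      ∃ x, l[m]? = some x ∧ f m x = blk := by
    intro m blk h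
    simpa [getElem?_mapIdx, Option.map_eq_some_iff] using h
  have hne' : ∀ blk ∈ l.mapIdx f, blk ≠ [] := by
    intro blk hblk
    obtain ⟨m, hm⟩ := getElem?_of_mem hblk
    obtain ⟨x, hx, rfl⟩ := hblock m blk hm
    exact hne m x (mem_of_getElem? hx)
  rcases flatten_consecutive_cases hne' ha hb with
    ⟨m, blk, i, hm, hi, hi'⟩ | ⟨m, blk, blk', hm, hm', hlast, hhead⟩
  · obtain ⟨x, hx, rfl⟩ := hblock m blk hm
    exact Or.inl ⟨m, x, i, hx, hi, hi'⟩
  · obtain ⟨x, hx, rfl⟩ := hblock m blk hm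
    obtain ⟨y, hy, rfl⟩ := hblock (m + 1) blk' hm'
    exact Or.inr ⟨m, x, y, hx, hy, hlast, hhead⟩

theorem SortedLT.exists_of_filter_map_consecutive [LinearOrder α] {l : List α} (hl : l.SortedLT)
    {g : α → β} {p : β → Bool} {k : ℕ} {a b : β}
    (ha : ((l.map g).filter p)[k]? = some a) (hb : ((l.map g).filter p)[k + 1]? = some b) :
    ∃ i ∈ l, ∃ j ∈ l, i < j ∧ a = g i ∧ b = g j ∧
      ∀ t ∈ l, i < t → t < j → p (g t) = false := by
  rw [filter_map, getElem?_map, Option.map_eq_some_iff] at ha hb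
  set F := l.filter (p ∘ g)
  have hF : F.SortedLT := (hl.pairwise.filter _).sortedLT
  obtain ⟨_, hFk, rfl⟩ := ha
  obtain ⟨_, hFk', rfl⟩ := hb
  obtain ⟨hk, rfl⟩ := getElem?_eq_some_iff.mp hFk
  obtain ⟨hk', rfl⟩ := getElem?_eq_some_iff.mp hFk'
  refine ⟨_, (mem_filter.mp (getElem_mem hk)).1, _, (mem_filter.mp (getElem_mem hk')).1,
    hF.getElem_lt_getElem_iff.mpr (Nat.lt_succ_self k), rfl, rfl, fun t ht hkt htk => ?_⟩
  by_contra hpt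
  have htF : t ∈ F := mem_filter.mpr ⟨ht, by simpa using hpt⟩
  obtain ⟨k'', hk'', rfl⟩ := getElem_of_mem htF
  rw [hF.getElem_lt_getElem_iff] at hkt htk
  omega

end List

open List

section Permutations

variable {l π ρ : List ℕ} {n v d : ℕ}

theorem length_of_mem_symmList (h : l ∈ SymmList n) : l.length = n := by
  simpa using h.length_eq

theorem le_of_mem_symmList (h : l ∈ SymmList n) {x : ℕ} (hx : x ∈ l) : x ≤ n := by
  have := mem_range'_1.mp (h.mem_iff.mp hx)
  omega

theorem succ_notMem_of_mem_symmList (h : l ∈ SymmList n) : n + 1 ∉ l :=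
  fun hx => by simpa using le_of_mem_symmList h hx

theorem pdel_mem_symmList (h : l ∈ SymmList (n + 1)) : pdel l ∈ SymmList n := by
  have hrange : (range' 1 (n + 1)).erase (n + 1) = range' 1 n := by
    rw [range'_concat, one_mul, add_comm 1 n,
      erase_append_right _ (fun hx => by have := mem_range'_1.mp hx; omega)]
    simp
  show (l.erase l.length).Perm (range' 1 n)
  rw [length_of_mem_symmList h, ← hrange]
  exact h.erase _

theorem pdel_cons (h : l ∈ SymmList n) : pdel ((n + 1) :: l) = l := by
  simp [pdel, length_of_mem_symmList h]

theorem pdel_append_singleton (h : l ∈ SymmList n) : pdel (l ++ [n + 1]) = l := by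
  simp [pdel, length_of_mem_symmList h, erase_append_right _ (succ_notMem_of_mem_symmList h)]

theorem RightJump.perm (h : RightJump π ρ v d) : π ~ ρ := by
  obtain ⟨-, A, B, C, -, -, rfl, rfl⟩ := h
  exact perm_middle.symm.append_left A

theorem RightJump.mem_symmList (h : RightJump π ρ v d) (hπ : π ∈ SymmList n) :
    ρ ∈ SymmList n :=
  h.perm.symm.trans hπ

theorem RightJump.mem_left (h : RightJump π ρ v d) : v ∈ π := by
  obtain ⟨-, A, B, C, -, -, rfl, -⟩ := h
  simp

theorem RightJump.mem_right (h : RightJump π ρ v d) : v ∈ ρ := by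
  obtain ⟨-, A, B, C, -, -, -, rfl⟩ := h
  simp

end Permutations

section InsertionJumps

variable {L : Set (List ℕ)} {π' ρ A C : List ℕ} {n i j d : ℕ}

theorem cins_append (A C : List ℕ) :
    cins (A.length + 1) (A ++ C) = A ++ ((A ++ C).length + 1) :: C := by
  simp [cins]

theorem rightJump_cins (hπ' : π' ∈ SymmList n) (hi : 1 ≤ i) (hij : i < j) (hj : j ≤ n + 1) :
    RightJump (cins i π') (cins j π') (n + 1) (j - i) := by
  have hlen := length_of_mem_symmList hπ'
  obtain ⟨A, R, rfl, hA⟩ : ∃ A R, π' = A ++ R ∧ A.length = i - 1 :=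
    ⟨_, _, (take_append_drop (i - 1) π').symm, by simp; omega⟩
  obtain ⟨B, C, rfl, hB⟩ : ∃ B C, R = B ++ C ∧ B.length = j - i :=
    ⟨_, _, (take_append_drop (j - i) R).symm, by simp at hlen ⊢; omega⟩
  obtain rfl : i = A.length + 1 := by omega
  obtain rfl : j = (A ++ B).length + 1 := by simp; omega
  refine ⟨by omega, A, B, C, hB, fun x hx => ?_, ?_, ?_⟩
  · have := le_of_mem_symmList hπ' (x := x) (by simp [hx])
    omega
  · rw [cins_append, hlen]
  · rw [← append_assoc, cins_append]
    simp [← hlen, Nat.add_assoc]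

theorem eq_append_of_cins_eq (hπ' : π' ∈ SymmList n) (hi : i ≤ n + 1)
    (h : cins i π' = A ++ (n + 1) :: C) : π' = A ++ C ∧ A.length = i - 1 := by
  have hlen := length_of_mem_symmList hπ'
  have hN := succ_notMem_of_mem_symmList hπ'
  rw [cins, hlen] at h
  obtain ⟨rfl, -, rfl⟩ := (append_cons_inj_of_notMem (fun hx => hN (mem_of_mem_take hx))
    (fun hx => hN (mem_of_mem_drop hx))).mp h
  exact ⟨(take_append_drop _ _).symm, by simp; omega⟩

theorem RightJump.eq_cins_of_cins (hπ' : π' ∈ SymmList n) (hi : 1 ≤ i) (hin : i ≤ n + 1)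
    (h : RightJump (cins i π') ρ (n + 1) d) : ρ = cins (i + d) π' ∧ i + d ≤ n + 1 := by
  obtain ⟨hd, A, B, C, hB, -, hsrc, rfl⟩ := h
  obtain ⟨rfl, hA⟩ := eq_append_of_cins_eq hπ' hin hsrc
  have hlen := length_of_mem_symmList hπ'
  simp only [length_append] at hlen
  rw [show i + d = (A ++ B).length + 1 by simp; omega]
  refine ⟨?_, by simp; omega⟩
  rw [← append_assoc A B C, cins_append]
  simp only [length_append, hlen, append_assoc]

theorem LeftJump.eq_cins_of_cins (hπ' : π' ∈ SymmList n) (hjn : j ≤ n + 1)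
    (h : LeftJump (cins j π') ρ (n + 1) d) : ρ = cins (j - d) π' ∧ d < j := by
  obtain ⟨hd, A, B, C, hB, -, rfl, htgt⟩ := h
  rw [← append_assoc] at htgt
  obtain ⟨rfl, hAB⟩ := eq_append_of_cins_eq hπ' hjn htgt
  have hlen := length_of_mem_symmList hπ'
  simp only [length_append] at hlen hAB
  rw [show j - d = A.length + 1 by omega]
  refine ⟨?_, by omega⟩
  rw [append_assoc, cins_append]
  simp only [length_append, ← Nat.add_assoc, hlen]

theorem minimalRightJump_cins (hπ' : π' ∈ SymmList n) (hi : 1 ≤ i) (hij : i < j)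
    (hj : j ≤ n + 1) (hgap : ∀ t, i < t → t < j → cins t π' ∉ L) :
    MinimalRightJump L (cins i π') (cins j π') (n + 1) (j - i) := by
  refine ⟨rightJump_cins hπ' hi hij hj, fun d' ρ hd' h => ?_⟩
  obtain ⟨rfl, -⟩ := h.eq_cins_of_cins hπ' hi (by omega)
  exact hgap _ (by have := h.1; omega) (by omega)

theorem minimalLeftJump_cins (hπ' : π' ∈ SymmList n) (hi : 1 ≤ i) (hij : i < j)
    (hj : j ≤ n + 1) (hgap : ∀ t, i < t → t < j → cins t π' ∉ L) :
    MinimalLeftJump L (cins j π') (cins i π') (n + 1) (j - i) := by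
  refine ⟨rightJump_cins hπ' hi hij hj, fun d' ρ hd' h => ?_⟩
  obtain ⟨rfl, -⟩ := h.eq_cins_of_cins hπ' hj
  exact hgap _ (by omega) (by have := h.1; omega)

end InsertionJumps

section InsertionSequence

variable {L : Set (List ℕ)} {π' a b x : List ℕ} {n m k : ℕ}

theorem mem_of_mem_cSeq (h : x ∈ cSeq L m π') : x ∈ L := by
  simpa using (mem_filter.mp h).2

theorem head?_cSeq (h : cins 1 π' ∈ L) : (cSeq L (n + 1) π').head? = some (cins 1 π') := by
  rw [cSeq, range'_succ, map_cons, filter_cons_of_pos (by simpa using h)]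
  rfl

theorem getLast?_cSeq (h : cins (n + 1) π' ∈ L) :
    (cSeq L (n + 1) π').getLast? = some (cins (n + 1) π') := by
  rw [cSeq, range'_concat, one_mul, add_comm 1 n, map_append, filter_append]
  simp [h]

theorem cSeq_consecutive (hπ' : π' ∈ SymmList n) (ha : (cSeq L (n + 1) π')[k]? = some a)
    (hb : (cSeq L (n + 1) π')[k + 1]? = some b) :
    ∃ d, MinimalRightJump L a b (n + 1) d ∧ MinimalLeftJump L b a (n + 1) d := by
  obtain ⟨i, hi, j, hj, hij, rfl, rfl, hgap⟩ :=
    (sortedLT_range' 1 (n + 1) one_ne_zero).exists_of_filter_map_consecutive ha hb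
  rw [mem_range'_1] at hi hj
  have hgap' : ∀ t, i < t → t < j → cins t π' ∉ L := fun t hit htj =>
    by simpa using hgap t (mem_range'_1.mpr (by omega)) hit htj
  exact ⟨j - i, minimalRightJump_cins hπ' hi.1 hij (by omega) hgap',
    minimalLeftJump_cins hπ' hi.1 hij (by omega) hgap'⟩

end InsertionSequence

noncomputable def Jblock (L : Set (List ℕ)) (n k : ℕ) (π : List ℕ) : List (List ℕ) :=
  if k % 2 = 0 then (cSeq L (n + 1) π).reverse else cSeq L (n + 1) π

section Blocks

variable {L : Set (List ℕ)} {π π' σ₁ σ₂ a b x : List ℕ} {n m k : ℕ}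

theorem Jseq_succ (n : ℕ) (L : Set (List ℕ)) :
    Jseq (n + 1) L = ((Jseq n (pdel '' L)).mapIdx (Jblock L n)).flatten :=
  rfl

theorem mem_of_mem_Jblock (h : x ∈ Jblock L n k π') : x ∈ L := by
  unfold Jblock at h
  split_ifs at h
  exacts [mem_of_mem_cSeq (mem_reverse.mp h), mem_of_mem_cSeq h]

theorem mem_of_mem_Jseq (hL : IsZigzag n L) (h : π ∈ Jseq n L) : π ∈ L := by
  cases hL with
  | zero => simpa [Jseq] using h
  | succ n L _ _ _ =>
    rw [Jseq_succ] at h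
    obtain ⟨blk, hblk, hπ⟩ := mem_flatten.mp h
    obtain ⟨m, hm, rfl⟩ := mem_mapIdx.mp hblk
    exact mem_of_mem_Jblock hπ

theorem Jblock_ne_nil (h : cins 1 π' ∈ L) : Jblock L n k π' ≠ [] := by
  have : cSeq L (n + 1) π' ≠ [] := fun hnil => by simpa [hnil] using head?_cSeq (n := n) h
  unfold Jblock
  split_ifs <;> simpa

theorem Jblock_consecutive (hπ' : π' ∈ SymmList n) (ha : (Jblock L n m π')[k]? = some a)
    (hb : (Jblock L n m π')[k + 1]? = some b) :
    ∃ v d, MinimalLeftJump L a b v d ∨ MinimalRightJump L a b v d := by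
  unfold Jblock at ha hb
  split_ifs at ha hb
  · obtain ⟨_, hb', ha'⟩ := exists_getElem?_of_reverse_consecutive ha hb
    obtain ⟨d, -, hleft⟩ := cSeq_consecutive hπ' hb' ha'
    exact ⟨n + 1, d, Or.inl hleft⟩
  · obtain ⟨d, hright, -⟩ := cSeq_consecutive hπ' ha hb
    exact ⟨n + 1, d, Or.inr hright⟩

theorem Jblock_boundary (h₁ : cins 1 σ₁ ∈ L ∧ cins (n + 1) σ₁ ∈ L)
    (h₂ : cins 1 σ₂ ∈ L ∧ cins (n + 1) σ₂ ∈ L)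
    (ha : (Jblock L n m σ₁).getLast? = some a) (hb : (Jblock L n (m + 1) σ₂).head? = some b) :
    ∃ i, (i = 1 ∨ i = n + 1) ∧ a = cins i σ₁ ∧ b = cins i σ₂ := by
  unfold Jblock at ha hb
  by_cases hm : m % 2 = 0
  · rw [if_pos hm, getLast?_reverse, head?_cSeq h₁.1, Option.some_inj] at ha
    rw [if_neg (by omega), head?_cSeq h₂.1, Option.some_inj] at hb
    exact ⟨1, Or.inl rfl, ha.symm, hb.symm⟩
  · rw [if_neg hm, getLast?_cSeq h₁.2, Option.some_inj] at ha
    rw [if_pos (by omega), head?_reverse, getLast?_cSeq h₂.2, Option.some_inj] at hb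
    exact ⟨n + 1, Or.inr rfl, ha.symm, hb.symm⟩

end Blocks

/-- `MinimalRightJump L π ρ v d` and `MinimalLeftJump L π ρ v d` unfold to
`MinimalMove (RightJump · · v ·) L π ρ d` and `MinimalMove (LeftJump · · v ·) L π ρ d`. -/
def MinimalMove (J : List ℕ → List ℕ → ℕ → Prop) (L : Set (List ℕ)) (π ρ : List ℕ)
    (d : ℕ) : Prop :=
  J π ρ d ∧ ∀ d' ρ', d' < d → J π ρ' d' → ρ' ∉ L

theorem MinimalMove.map {J : List ℕ → List ℕ → ℕ → Prop} {L : Set (List ℕ)}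
    {f : List ℕ → List ℕ} {π ρ : List ℕ} {d : ℕ}
    (hmap : ∀ ρ d, J π ρ d → J (f π) (f ρ) d)
    (hinv : ∀ τ d, J (f π) τ d → ∃ ρ, τ = f ρ ∧ J π ρ d)
    (hpdel : ∀ ρ d, J π ρ d → pdel (f ρ) = ρ)
    (h : MinimalMove J (pdel '' L) π ρ d) : MinimalMove J L (f π) (f ρ) d := by
  refine ⟨hmap _ _ h.1, fun d' τ hd' hτ hτL => ?_⟩
  obtain ⟨ρ', rfl, hρ'⟩ := hinv τ d' hτ
  exact h.2 d' ρ' hd' hρ' ⟨f ρ', hτL, hpdel ρ' d' hρ'⟩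

section Lifting

variable {L : Set (List ℕ)} {π ρ a c : List ℕ} {n v d N : ℕ}

theorem RightJump.cons (h : RightJump π ρ v d) (N : ℕ) : RightJump (N :: π) (N :: ρ) v d := by
  obtain ⟨hd, A, B, C, hB, hBv, rfl, rfl⟩ := h
  exact ⟨hd, N :: A, B, C, hB, hBv, rfl, rfl⟩

theorem RightJump.append_singleton (h : RightJump π ρ v d) (N : ℕ) :
    RightJump (π ++ [N]) (ρ ++ [N]) v d := by
  obtain ⟨hd, A, B, C, hB, hBv, rfl, rfl⟩ := h
  exact ⟨hd, A, B, C ++ [N], hB, hBv, by simp, by simp⟩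

theorem RightJump.reverse (h : RightJump π ρ v d) : RightJump ρ.reverse π.reverse v d := by
  obtain ⟨hd, A, B, C, hB, hBv, rfl, rfl⟩ := h
  exact ⟨hd, C.reverse, B.reverse, A.reverse, by simpa, by simpa, by simp, by simp⟩

theorem RightJump.exists_of_cons_left (hv : v < N) (h : RightJump (N :: a) c v d) :
    ∃ b, c = N :: b ∧ RightJump a b v d := by
  obtain ⟨hd, _ | ⟨x, A⟩, B, C, hB, hBv, hsrc, rfl⟩ := h
  · simp at hsrc
    omega
  · simp only [cons_append, cons.injEq] at hsrc
    obtain ⟨rfl, rfl⟩ := hsrc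
    exact ⟨_, rfl, hd, A, B, C, hB, hBv, rfl, rfl⟩

theorem RightJump.exists_of_cons_right (hv : v < N) (h : RightJump c (N :: a) v d) :
    ∃ b, c = N :: b ∧ RightJump b a v d := by
  obtain ⟨hd, _ | ⟨x, A⟩, B, C, hB, hBv, rfl, htgt⟩ := h
  · obtain _ | ⟨y, B⟩ := B
    · simp at htgt
      omega
    · simp only [nil_append, cons_append, cons.injEq] at htgt
      have := hBv y (by simp)
      omega
  · simp only [cons_append, cons.injEq] at htgt
    obtain ⟨rfl, rfl⟩ := htgt
    exact ⟨_, rfl, hd, A, B, C, hB, hBv, rfl, rfl⟩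

theorem RightJump.exists_of_append_singleton_left (hv : v < N)
    (h : RightJump (a ++ [N]) c v d) : ∃ b, c = b ++ [N] ∧ RightJump a b v d := by
  have hrev := h.reverse
  rw [reverse_append, reverse_singleton, singleton_append] at hrev
  obtain ⟨b, hb, hjump⟩ := hrev.exists_of_cons_right hv
  exact ⟨b.reverse, by simpa using congrArg List.reverse hb, by simpa using hjump.reverse⟩

theorem RightJump.exists_of_append_singleton_right (hv : v < N)
    (h : RightJump c (a ++ [N]) v d) : ∃ b, c = b ++ [N] ∧ RightJump b a v d := by
  have hrev := h.reverse
  rw [reverse_append, reverse_singleton, singleton_append] at hrev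
  obtain ⟨b, hb, hjump⟩ := hrev.exists_of_cons_left hv
  exact ⟨b.reverse, by simpa using congrArg List.reverse hb, by simpa using hjump.reverse⟩

theorem minimalJump_map {f : List ℕ → List ℕ} (hπ : π ∈ SymmList n)
    (hmap : ∀ a b d, RightJump a b v d → RightJump (f a) (f b) v d)
    (hinv_left : ∀ a c d, RightJump (f a) c v d → ∃ b, c = f b ∧ RightJump a b v d)
    (hinv_right : ∀ a c d, RightJump c (f a) v d → ∃ b, c = f b ∧ RightJump b a v d)
    (hpdel : ∀ b ∈ SymmList n, pdel (f b) = b)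
    (h : MinimalLeftJump (pdel '' L) π ρ v d ∨ MinimalRightJump (pdel '' L) π ρ v d) :
    MinimalLeftJump L (f π) (f ρ) v d ∨ MinimalRightJump L (f π) (f ρ) v d := by
  rcases h with h | h
  · exact Or.inl (MinimalMove.map (J := fun π ρ d => LeftJump π ρ v d) (fun _ _ => hmap _ _ _)
      (fun _ _ => hinv_right _ _ _) (fun _ _ hj => hpdel _ (hj.perm.trans hπ)) h)
  · exact Or.inr (MinimalMove.map (J := fun π ρ d => RightJump π ρ v d) (fun _ _ => hmap _ _ _)
      (fun _ _ => hinv_left _ _ _) (fun _ _ hj => hpdel _ (hj.mem_symmList hπ)) h)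

theorem cins_one_of_mem_symmList (h : π ∈ SymmList n) : cins 1 π = (n + 1) :: π := by
  simp [cins, length_of_mem_symmList h]

theorem cins_succ_of_mem_symmList (h : π ∈ SymmList n) : cins (n + 1) π = π ++ [n + 1] := by
  obtain rfl := length_of_mem_symmList h
  simp [cins]

theorem minimalJump_cins_of_pdel {i : ℕ} (hi : i = 1 ∨ i = n + 1) (hπ : π ∈ SymmList n)
    (h : MinimalLeftJump (pdel '' L) π ρ v d ∨ MinimalRightJump (pdel '' L) π ρ v d) :
    MinimalLeftJump L (cins i π) (cins i ρ) v d ∨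
      MinimalRightJump L (cins i π) (cins i ρ) v d := by
  have hρ : ρ ∈ SymmList n := by
    rcases h with h | h
    exacts [h.1.perm.trans hπ, h.1.mem_symmList hπ]
  have hv : v < n + 1 := by
    have hvπ : v ∈ π := by
      rcases h with h | h
      exacts [h.1.mem_right, h.1.mem_left]
    have := le_of_mem_symmList hπ hvπ
    omega
  rcases hi with rfl | rfl
  · rw [cins_one_of_mem_symmList hπ, cins_one_of_mem_symmList hρ]
    exact minimalJump_map (f := ((n + 1) :: ·)) hπ (fun _ _ _ h => h.cons _)
      (fun _ _ _ h => h.exists_of_cons_left hv) (fun _ _ _ h => h.exists_of_cons_right hv)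
      (fun _ hb => pdel_cons hb) h
  · rw [cins_succ_of_mem_symmList hπ, cins_succ_of_mem_symmList hρ]
    exact minimalJump_map (f := (· ++ [n + 1])) hπ (fun _ _ _ h => h.append_singleton _)
      (fun _ _ _ h => h.exists_of_append_singleton_left hv)
      (fun _ _ _ h => h.exists_of_append_singleton_right hv)
      (fun _ hb => pdel_append_singleton hb) h

end Lifting

/-- For every zigzag language `L_n ⊆ S_n` and any two consecutive
permutations `π, ρ` in `J(L_n)`, the permutation `ρ` is obtained from `π` by a
left or right jump of some value, and this jump is minimal with respect to `L_n`. -/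
theorem Jseq_consecutive_minimal_jump (n : ℕ) (L : Set (List ℕ)) (hL : IsZigzag n L)
    (k : ℕ) (π ρ : List ℕ)
    (hπ : (Jseq n L)[k]? = some π) (hρ : (Jseq n L)[k + 1]? = some ρ) :
    ∃ v d, MinimalLeftJump L π ρ v d ∨ MinimalRightJump L π ρ v d := by
  induction hL generalizing k π ρ with
  | zero => simp [Jseq] at hρ
  | succ n L hsub hz hcl ih =>
    have hJ : ∀ {m σ}, (Jseq n (pdel '' L))[m]? = some σ → σ ∈ pdel '' L :=
      fun hσ => mem_of_mem_Jseq hz (mem_of_getElem? hσ)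
    have hsym : ∀ σ ∈ pdel '' L, σ ∈ SymmList n := by
      rintro _ ⟨τ, hτ, rfl⟩
      exact pdel_mem_symmList (hsub hτ)
    rw [Jseq_succ] at hπ hρ
    rcases flatten_mapIdx_consecutive_cases
        (fun _ σ hσ => Jblock_ne_nil (hcl σ (mem_of_mem_Jseq hz hσ)).1) hπ hρ with
      ⟨m, σ, i, hσ, hπ', hρ'⟩ | ⟨m, σ₁, σ₂, hσ₁, hσ₂, hπ', hρ'⟩
    · exact Jblock_consecutive (hsym σ (hJ hσ)) hπ' hρ'
    · obtain ⟨i, hi, rfl, rfl⟩ :=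
        Jblock_boundary (hcl σ₁ (hJ hσ₁)) (hcl σ₂ (hJ hσ₂)) hπ' hρ'
      obtain ⟨v, d, hjump⟩ := ih m σ₁ σ₂ hσ₁ hσ₂
      exact ⟨v, d, minimalJump_cins_of_pdel hi (hsym σ₁ (hJ hσ₁)) hjump⟩
end

section
/- For every n ≥ 1, the set of 2-clumped permutations satisfies S'_{n−1} = {p(π) : π ∈ S'_n}; that is, deleting the largest entry of a 2-clumped permutation of length n yields a 2-clumped permutation of length n−1, and every 2-clumped permutation of length n−1 arises in this way from some 2-clumped permutation of length n. -/
/-!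
Deleting the maximum `n` cannot create an occurrence of a pattern: reinserting `n` shifts an
occurrence in `p(π)` to one in `π`, unless `n` lands exactly inside the marked adjacent pair;
since in each of the four patterns the `5` is the maximum and stands immediately left of the
marked `1`, in that case `n` itself can play the role of the `5`. Conversely, none of the four
patterns begins with its maximum, so no occurrence in `c_1(π) = n π` uses the leading `n`, and
`c_1` maps `S'_{n-1}` into `S'_n` with `p ∘ c_1 = id`.
-/

/-- An occurrence of `pat` as a classical (not vincular) pattern, at the 0-indexed positions
`f 0 < f 1 < ⋯` of `π`. -/
def IsOccurrence (π pat : List ℕ) (f : ℕ → ℕ) : Prop :=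
  StrictMonoOn f (Set.Iio pat.length) ∧ (∀ i < pat.length, f i < π.length) ∧
    ∀ i < pat.length, ∀ j < pat.length,
      (pat.getD i 0 < pat.getD j 0 ↔ π.getD (f i) 0 < π.getD (f j) 0)

theorem containsVincular_iff {π pat : List ℕ} {k : ℕ} :
    ContainsVincular π pat k ↔ ∃ f, IsOccurrence π pat f ∧ f (k + 1) = f k + 1 :=
  ⟨fun ⟨f, hmono, hbd, hadj, hord⟩ => ⟨f, ⟨hmono, hbd, hord⟩, hadj⟩,
    fun ⟨f, ⟨hmono, hbd, hord⟩, hadj⟩ => ⟨f, hmono, hbd, hadj, hord⟩⟩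

namespace IsOccurrence

variable {π σ pat : List ℕ} {f : ℕ → ℕ}

theorem map {g : ℕ → ℕ} {s : Set ℕ} (hf : IsOccurrence π pat f)
    (hfs : ∀ i < pat.length, f i ∈ s) (hg : StrictMonoOn g s)
    (hlen : ∀ p ∈ s, p < π.length → g p < σ.length)
    (hval : ∀ p ∈ s, σ.getD (g p) 0 = π.getD p 0) :
    IsOccurrence σ pat (g ∘ f) := by
  obtain ⟨hmono, hbd, hord⟩ := hf
  refine ⟨fun i hi j hj hij => hg (hfs i hi) (hfs j hj) (hmono hi hj hij),
    fun i hi => hlen _ (hfs i hi) (hbd i hi), fun i hi j hj => ?_⟩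
  rw [Function.comp_apply, Function.comp_apply, hval _ (hfs i hi), hval _ (hfs j hj)]
  exact hord i hi j hj

theorem update_of_max {k p : ℕ} (hf : IsOccurrence π pat f) (hk : k + 1 < pat.length)
    (hpat : ∀ i < pat.length, i ≠ k → pat.getD i 0 < pat.getD k 0)
    (hfp : f k ≤ p) (hpf : p < f (k + 1))
    (hπ : ∀ i < pat.length, i ≠ k → π.getD (f i) 0 < π.getD p 0) :
    IsOccurrence π pat (Function.update f k p) := by
  obtain ⟨hmono, hbd, hord⟩ := hf
  refine ⟨fun i hi j hj hij => ?_, fun i hi => ?_, fun i hi j hj => ?_⟩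
  · rcases eq_or_ne i k with rfl | hik <;> rcases eq_or_ne j i with rfl | hji
    · exact absurd hij (lt_irrefl _)
    · have : f (i + 1) ≤ f j := (hmono.le_iff_le hk hj).2 hij
      simpa [Function.update_of_ne hji] using hpf.trans_le this
    · exact absurd hij (lt_irrefl _)
    · rcases eq_or_ne j k with rfl | hjk
      · simpa [Function.update_of_ne hik] using (hmono hi hj hij).trans_le hfp
      · simpa [Function.update_of_ne hik, Function.update_of_ne hjk] using hmono hi hj hij
  · rcases eq_or_ne i k with rfl | hik
    · simpa using hpf.trans (hbd _ hk)
    · simpa [Function.update_of_ne hik] using hbd i hi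
  · rcases eq_or_ne i k with rfl | hik <;> rcases eq_or_ne j i with rfl | hji
    · simp
    · have h1 := hpat j hj hji
      have h2 := hπ j hj hji
      simp only [Function.update_self, Function.update_of_ne hji]
      exact iff_of_false (lt_asymm h1) (lt_asymm h2)
    · simp
    · rcases eq_or_ne j k with rfl | hjk
      · simp only [Function.update_self, Function.update_of_ne hik]
        exact iff_of_true (hpat i hi hik) (hπ i hi hik)
      · simp only [Function.update_of_ne hik, Function.update_of_ne hjk]
        exact hord i hi j hj

end IsOccurrence

theorem List.getD_append_cons_shift (A B : List ℕ) (m p : ℕ) :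
    (A ++ m :: B).getD (if p < A.length then p else p + 1) 0 = (A ++ B).getD p 0 := by
  split_ifs with hp
  · rw [List.getD_append _ _ _ _ hp, List.getD_append _ _ _ _ hp]
  · rw [List.getD_append_right _ _ _ _ (by omega), List.getD_append_right _ _ _ _ (by omega),
      show p + 1 - A.length = (p - A.length) + 1 by omega, List.getD_cons_succ]

theorem List.getD_lt_of_forall_lt {l : List ℕ} {m p : ℕ} (hm : ∀ x ∈ l, x < m)
    (hp : p < l.length) : l.getD p 0 < m := by
  rw [List.getD_eq_getElem _ _ hp]
  exact hm _ (List.getElem_mem hp)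

namespace ContainsVincular

variable {pat : List ℕ} {k m : ℕ}

theorem insert_max {A B : List ℕ} (hk : k + 1 < pat.length)
    (hpat : ∀ i < pat.length, i ≠ k → pat.getD i 0 < pat.getD k 0)
    (hm : ∀ x ∈ A ++ B, x < m) (h : ContainsVincular (A ++ B) pat k) :
    ContainsVincular (A ++ m :: B) pat k := by
  obtain ⟨f, hf, hadj⟩ := containsVincular_iff.1 h
  set g : ℕ → ℕ := fun p => if p < A.length then p else p + 1 with hg_def
  have hg : IsOccurrence (A ++ m :: B) pat (g ∘ f) :=
    hf.map (s := Set.univ) (fun _ _ => trivial)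
      (fun a _ b _ hab => by simp only [hg_def]; split_ifs <;> omega)
      (fun p _ hp => by
        simp only [hg_def, List.length_append, List.length_cons] at hp ⊢
        split_ifs <;> omega)
      (fun p _ => List.getD_append_cons_shift A B m p)
  rw [containsVincular_iff]
  by_cases hsplit : f k + 1 = A.length
  · refine ⟨Function.update (g ∘ f) k A.length, hg.update_of_max hk hpat ?_ ?_ ?_, ?_⟩
    · simp only [Function.comp_apply, hg_def]; split_ifs <;> omega
    · simp only [Function.comp_apply, hg_def, hadj]; split_ifs <;> omega
    · intro i hi _
      rw [Function.comp_apply, List.getD_append_cons_shift, List.getD_append_right _ _ _ _ le_rfl,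
        Nat.sub_self, List.getD_cons_zero]
      exact List.getD_lt_of_forall_lt hm (hf.2.1 i hi)
    · simp only [Function.update_of_ne (show k + 1 ≠ k by omega), Function.update_self,
        Function.comp_apply, hg_def, hadj]
      split_ifs <;> omega
  · refine ⟨g ∘ f, hg, ?_⟩
    simp only [Function.comp_apply, hg_def, hadj]
    split_ifs <;> omega

theorem of_cons_max {l : List ℕ} {j : ℕ} (hk : k < pat.length) (hj : j < pat.length)
    (hpat : pat.getD 0 0 < pat.getD j 0) (hm : ∀ x ∈ l, x < m)
    (h : ContainsVincular (m :: l) pat k) : ContainsVincular l pat k := by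
  obtain ⟨f, hf, hadj⟩ := containsVincular_iff.1 h
  have hj0 : 0 < j := Nat.pos_of_ne_zero (by rintro rfl; exact lt_irrefl _ hpat)
  have hf0 : 0 < f 0 := by
    by_contra hf0
    have hlt := (hf.2.2 0 (hj0.trans hj) j hj).1 hpat
    obtain ⟨q, hq⟩ : ∃ q, f j = q + 1 :=
      Nat.exists_eq_add_one.2 ((Nat.eq_zero_of_not_pos hf0) ▸ hf.1 (hj0.trans hj) hj hj0)
    rw [Nat.eq_zero_of_not_pos hf0, List.getD_cons_zero, hq, List.getD_cons_succ] at hlt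
    have hbd := hf.2.1 j hj
    rw [hq, List.length_cons] at hbd
    exact lt_asymm hlt (List.getD_lt_of_forall_lt hm (by omega))
  have hpos : ∀ i < pat.length, f i ∈ Set.Ioi 0 := fun i hi =>
    hf0.trans_le ((hf.1.le_iff_le (hj0.trans hj) hi).2 (Nat.zero_le i))
  refine containsVincular_iff.2 ⟨(· - 1) ∘ f, hf.map hpos (fun a ha b _ hab => ?_)
    (fun p hp hpl => ?_) (fun p hp => ?_), ?_⟩
  · have : 0 < a := ha
    omega
  · have : 0 < p := hp
    rw [List.length_cons] at hpl
    show p - 1 < l.length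
    omega
  · rw [← List.getD_cons_succ (x := m), Nat.sub_add_cancel (hp : 0 < p)]
  · have := hpos k hk
    simp only [Function.comp_apply, hadj, Set.mem_Ioi] at this ⊢
    omega

end ContainsVincular

namespace TwoClumped

theorem of_insert_max {A B : List ℕ} {m : ℕ} (hm : ∀ x ∈ A ++ B, x < m)
    (h : TwoClumped (A ++ m :: B)) : TwoClumped (A ++ B) := by
  obtain ⟨h₁, h₂, h₃, h₄⟩ := h
  exact ⟨fun hc => h₁ (hc.insert_max (by decide) (by decide) hm),
    fun hc => h₂ (hc.insert_max (by decide) (by decide) hm),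
    fun hc => h₃ (hc.insert_max (by decide) (by decide) hm),
    fun hc => h₄ (hc.insert_max (by decide) (by decide) hm)⟩

theorem cons_max {l : List ℕ} {m : ℕ} (hm : ∀ x ∈ l, x < m) (h : TwoClumped l) :
    TwoClumped (m :: l) := by
  obtain ⟨h₁, h₂, h₃, h₄⟩ := h
  exact ⟨fun hc => h₁ (hc.of_cons_max (j := 1) (by decide) (by decide) (by decide) hm),
    fun hc => h₂ (hc.of_cons_max (j := 1) (by decide) (by decide) (by decide) hm),
    fun hc => h₃ (hc.of_cons_max (j := 2) (by decide) (by decide) (by decide) hm),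
    fun hc => h₄ (hc.of_cons_max (j := 2) (by decide) (by decide) (by decide) hm)⟩

end TwoClumped

theorem cins_one (l : List ℕ) : cins 1 l = (l.length + 1) :: l := by
  simp [cins]

theorem pdel_cins {l : List ℕ} (i : ℕ) (hl : l.length + 1 ∉ l) : pdel (cins i l) = l := by
  have hlen : (cins i l).length = l.length + 1 := by
    simp only [cins, List.length_append, List.length_cons, List.length_take, List.length_drop]
    omega
  rw [pdel, hlen, cins, List.erase_append_right _ (fun h => hl (List.mem_of_mem_take h)),
    List.erase_cons_head, List.take_append_drop]

namespace SymmList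

variable {n : ℕ} {l : List ℕ}

theorem length_eq (h : l ∈ SymmList n) : l.length = n := by
  simpa using List.Perm.length_eq h

theorem lt_of_mem (h : l ∈ SymmList n) {x : ℕ} (hx : x ∈ l) : x < n + 1 := by
  have := List.mem_range'_1.1 (List.Perm.subset h hx)
  omega

theorem cons_succ (h : l ∈ SymmList n) : (n + 1) :: l ∈ SymmList (n + 1) := by
  show List.Perm _ _
  rw [List.range'_concat, Nat.one_mul, Nat.add_comm 1 n]
  exact (List.Perm.cons _ h).trans (List.perm_append_singleton _ _).symm

theorem exists_eq_append_cons (h : l ∈ SymmList (n + 1)) :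
    ∃ A B, l = A ++ (n + 1) :: B ∧ pdel l = A ++ B ∧ A ++ B ∈ SymmList n := by
  have hmem : n + 1 ∈ l := List.Perm.mem_iff h |>.2 (List.mem_range'_1.2 ⟨by omega, by omega⟩)
  obtain ⟨A, B, -, rfl, herase⟩ := List.exists_erase_eq hmem
  refine ⟨A, B, rfl, by rw [pdel, length_eq h, herase], ?_⟩
  have : List.Perm ((n + 1) :: (A ++ B)) ((n + 1) :: List.range' 1 n) := by
    refine List.perm_middle.symm.trans (h.trans ?_)
    rw [List.range'_concat, Nat.one_mul, Nat.add_comm 1 n]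
    exact List.perm_append_singleton _ _
  exact this.cons_inv

end SymmList

theorem cins_one_mem_SClump {n : ℕ} {l : List ℕ} (h : l ∈ SClump n) :
    cins 1 l ∈ SClump (n + 1) := by
  rw [cins_one, SymmList.length_eq h.1]
  exact ⟨SymmList.cons_succ h.1, h.2.cons_max fun _ hx => SymmList.lt_of_mem h.1 hx⟩

theorem pdel_mem_SClump {n : ℕ} {l : List ℕ} (h : l ∈ SClump (n + 1)) : pdel l ∈ SClump n := by
  obtain ⟨A, B, rfl, hpdel, hAB⟩ := SymmList.exists_eq_append_cons h.1
  rw [hpdel]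
  exact ⟨hAB, h.2.of_insert_max fun _ hx => SymmList.lt_of_mem hAB hx⟩

/-- For every `n ≥ 1`, the set of 2-clumped permutations
satisfies `S'_{n−1} = {p(π) : π ∈ S'_n}`. -/
theorem SClump_pdel_image (n : ℕ) (hn : 1 ≤ n) :
    SClump (n - 1) = pdel '' SClump n := by
  obtain ⟨n, rfl⟩ := Nat.exists_eq_add_of_le' hn
  rw [Nat.add_sub_cancel]
  ext l
  refine ⟨fun h => ⟨cins 1 l, cins_one_mem_SClump h, pdel_cins 1 fun hl => ?_⟩, ?_⟩
  · exact (SymmList.lt_of_mem h.1 hl).ne (by rw [SymmList.length_eq h.1])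
  · rintro ⟨π, hπ, rfl⟩
    exact pdel_mem_SClump hπ
end
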